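/- arXiv:2109.00584 — 5 statements merged into one kernel-verified Lean document; each statement's English description precedes it below -/
import Mathlib

section
/- A constant-weight linear code (all nonzero codewords have equal Hamming weight) is a minimal code. -/
/-- Hamming weight of a vector. -/
noncomputable def hwt {ι F : Type*} [Zero F] (v : ι → F) : ℕ := {i | v i ≠ 0}.ncard

/-- A code is minimal if the support of every nonzero codeword contains the support of no
nonzero codeword other than its scalar multiples. -/
def IsMinimalCode {F ι : Type*} [Field F] (C : Set (ι → F)) : Prop :=
  ∀ c ∈ C, c ≠ 0 → ∀ c' ∈ C, c' ≠ 0 → {i | c' i ≠ 0} ⊆ {i | c i ≠ 0} →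
    ∃ l : F, l ≠ 0 ∧ c' = l • c

/-- A constant-weight linear code (all nonzero codewords have the same Hamming weight)
is a minimal code. -/
theorem constant_weight_is_minimal {F ι : Type*} [Field F] [Fintype ι]
    (C : Submodule F (ι → F)) (w : ℕ) (hw : ∀ c ∈ C, c ≠ 0 → hwt c = w) :
    IsMinimalCode (C : Set (ι → F)) := by
  intro c hc hc0 c' hc' hc'0 hsub
  -- pick i in support of c'
  obtain ⟨i, hi⟩ : ∃ i, c' i ≠ 0 := by
    by_contra h
    push_neg at h
    exact hc'0 (funext fun j => h j)
  have hci : c i ≠ 0 := hsub hi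
  set l : F := c' i / c i with hl
  have hl0 : l ≠ 0 := div_ne_zero hi hci
  refine ⟨l, hl0, ?_⟩
  set d : ι → F := c' - l • c with hd
  have hdC : d ∈ C := C.sub_mem hc' (C.smul_mem l hc)
  have hdi : d i = 0 := by
    simp [hd, hl, div_mul_cancel₀ _ hci]
  have hdsub : {j | d j ≠ 0} ⊆ {j | c j ≠ 0} := by
    intro j hj
    simp only [Set.mem_setOf_eq] at hj ⊢
    intro hcj
    apply hj
    have hc'j : c' j = 0 := by
      by_contra h
      exact (hsub h) hcj
    simp [hd, hc'j, hcj]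
  by_contra hne
  have hd0 : d ≠ 0 := fun h => hne (by
    have := sub_eq_zero.mp (hd ▸ h)
    exact this)
  have hwd : hwt d = w := hw d hdC hd0
  have hwc : hwt c = w := hw c hc hc0
  have hss : {j | d j ≠ 0} ⊂ {j | c j ≠ 0} := by
    refine ⟨hdsub, fun h => ?_⟩
    have : d i ≠ 0 := h hci
    exact this hdi
  have : hwt d < hwt c :=
    Set.ncard_lt_ncard hss (Set.toFinite _)
  omega
end

section
/- (Geometric Ashikhmin–Barg condition) Let B be a set of n points in PG(k−1,q), let m (resp. M) be the minimum (resp. maximum) number of points of B contained in a hyperplane. If (n−M)/(n−m) > (q−1)/q, then B is a strong blocking set. -/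
open Projectivization
open scoped LinearAlgebra.Projectivization

/-- A set of points of a projective space is a strong blocking set if its intersection with
every hyperplane (coatom of the submodule lattice) spans that hyperplane. -/
def IsStrongBlocking {F V : Type*} [Field F] [AddCommGroup V] [Module F V]
    (B : Set (ℙ F V)) : Prop :=
  ∀ H : Submodule F V, IsCoatom H →
    (⨆ P ∈ {P ∈ B | Projectivization.submodule P ≤ H}, Projectivization.submodule P) = H

/-!
Suppose the points of `B` on a hyperplane `H = ker g` span only a proper subspace `S < H`.
Choose a functional `f` vanishing on `S` but not on `H`. The hyperplanes `ker (f + c • g)`,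
`c ∈ F`, together with `H` form the pencil through the codimension-two space `ker f ⊓ ker g ⊇ S`,
so every point of `B` off `H` lies on one of these `q` hyperplanes, each of which contains the
`s` points of `B` on `H`. Hence `n ≤ s + q (M - s)`, and with `m ≤ s ≤ n` this gives
`(n - M) / (n - m) ≤ (q - 1) / q`.
-/

open Module LinearMap

section Pencil

variable {F V : Type*} [Field F] [AddCommGroup V] [Module F V]

lemma exists_dual_ker_eq_of_isCoatom {H : Submodule F V} (hH : IsCoatom H) :
    ∃ g : Dual F V, ker g = H := by
  obtain ⟨w, -, hw⟩ := SetLike.exists_of_lt hH.lt_top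
  obtain ⟨g, hgw, hgH⟩ := H.exists_dual_map_eq_bot_of_notMem hw inferInstance
  have hker_ne_top : ker g ≠ ⊤ := fun htop => hgw (mem_ker.1 (htop.symm ▸ Submodule.mem_top))
  exact ⟨g, (hH.le_iff.1 (le_ker_iff_map.2 hgH)).resolve_left hker_ne_top⟩

lemma exists_dual_le_ker_not_le_ker {S H : Submodule F V} (h : S < H) :
    ∃ f : Dual F V, S ≤ ker f ∧ ¬ H ≤ ker f := by
  obtain ⟨u, huH, huS⟩ := SetLike.exists_of_lt h
  obtain ⟨f, hfu, hfS⟩ := S.exists_dual_map_eq_bot_of_notMem huS inferInstance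
  exact ⟨f, le_ker_iff_map.2 hfS, fun hle => hfu (hle huH)⟩

variable {f g : Dual F V}

lemma isCoatom_ker_add_smul (hfg : ¬ ker g ≤ ker f) (c : F) : IsCoatom (ker (f + c • g)) := by
  obtain ⟨u, hug, huf⟩ := SetLike.not_le_iff_exists.1 hfg
  have hne : f + c • g ≠ 0 := fun h0 => huf <| by
    simpa [mem_ker.1 hug] using LinearMap.congr_fun h0 u
  exact isCoatom_ker_of_surjective (surjective_of_ne_zero hne)

lemma ker_inf_le_ker_add_smul (c : F) : ker f ⊓ ker g ≤ ker (f + c • g) := by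
  rintro v ⟨hf, hg⟩
  simp_all [mem_ker]

lemma Projectivization.exists_submodule_le_ker_add_smul {P : ℙ F V} (hP : ¬ P.submodule ≤ ker g) :
    ∃ c : F, P.submodule ≤ ker (f + c • g) := by
  simp only [submodule_eq, Submodule.span_singleton_le_iff_mem, mem_ker] at hP ⊢
  exact ⟨-(f P.rep / g P.rep), by simp [field]⟩

end Pencil

lemma Set.ncard_le_add_card_mul_of_subset_union_iUnion {α ι : Type*} [Finite α] [Fintype ι]
    {A B : Set α} {C : ι → Set α} {M : ℕ} (hB : B ⊆ A ∪ ⋃ i, C i) (hAC : ∀ i, A ⊆ C i)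
    (hCM : ∀ i, (C i).ncard ≤ M) :
    B.ncard ≤ A.ncard + Fintype.card ι * (M - A.ncard) := by
  have hB' : B ⊆ A ∪ ⋃ i, (C i \ A) := by
    intro x hx
    by_cases hxA : x ∈ A
    · exact Or.inl hxA
    · obtain hxA' | ⟨_, ⟨i, rfl⟩, hxC⟩ := hB hx
      · exact absurd hxA' hxA
      · exact Or.inr (Set.mem_iUnion.2 ⟨i, hxC, hxA⟩)
  calc B.ncard ≤ (A ∪ ⋃ i, (C i \ A)).ncard := Set.ncard_le_ncard hB'
    _ ≤ A.ncard + (⋃ i, (C i \ A)).ncard := Set.ncard_union_le _ _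
    _ ≤ A.ncard + ∑ i, (C i \ A).ncard := by gcongr; exact Set.ncard_iUnion_le_of_fintype _
    _ ≤ A.ncard + ∑ _i : ι, (M - A.ncard) := by
        gcongr with i
        rw [Set.ncard_sdiff (hAC i)]
        exact Nat.sub_le_sub_right (hCM i) _
    _ = A.ncard + Fintype.card ι * (M - A.ncard) := by simp

lemma div_sub_le_of_le_add_mul {K : Type*} [Field K] [LinearOrder K] [IsStrictOrderedRing K]
    {q n m M s : K} (hq : 1 ≤ q) (hms : m ≤ s) (hsn : s ≤ n) (hn : n ≤ s + q * (M - s)) :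
    (n - M) / (n - m) ≤ (q - 1) / q := by
  rcases (sub_nonneg.2 (hms.trans hsn)).eq_or_lt with hnm | hnm
  · rw [← hnm, div_zero]
    exact div_nonneg (by linarith) (by linarith)
  · rw [div_le_div_iff₀ hnm (by linarith)]
    linarith [mul_nonneg (sub_nonneg.2 hq) (sub_nonneg.2 hms)]

/-- Geometric Ashikhmin–Barg condition: if `B` is a set of `n` points of `PG(k-1,q)`,
`m` (resp. `M`) is a lower (resp. upper) bound for the number of points of `B` on any
hyperplane, and `(n - M)/(n - m) > (q - 1)/q`, then `B` is a strong blocking set. -/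
theorem geometric_AB_condition {F : Type*} [Field F] [Fintype F] {k : ℕ}
    (B : Set (ℙ F (Fin k → F))) (n m M : ℕ) (hn : B.ncard = n)
    (hm : ∀ H : Submodule F (Fin k → F), IsCoatom H →
      m ≤ {P ∈ B | Projectivization.submodule P ≤ H}.ncard)
    (hM : ∀ H : Submodule F (Fin k → F), IsCoatom H →
      {P ∈ B | Projectivization.submodule P ≤ H}.ncard ≤ M)
    (h : ((n : ℚ) - M) / ((n : ℚ) - m) > ((Fintype.card F : ℚ) - 1) / (Fintype.card F)) :
    IsStrongBlocking B := by
  intro H hH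
  by_contra hne
  set BH := {P ∈ B | P.submodule ≤ H}
  obtain ⟨g, rfl⟩ := exists_dual_ker_eq_of_isCoatom hH
  obtain ⟨f, hSf, hfg⟩ := exists_dual_le_ker_not_le_ker <|
    lt_of_le_of_ne (iSup₂_le fun P hP => hP.2) hne
  have hBH_le : ∀ P ∈ BH, P.submodule ≤ ker f ⊓ ker g := fun P hP =>
    le_inf ((le_iSup₂ (f := fun P (_ : P ∈ BH) => P.submodule) P hP).trans hSf) hP.2
  have hcover : B ⊆ BH ∪ ⋃ c : F, {P ∈ B | P.submodule ≤ ker (f + c • g)} := by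
    intro P hP
    by_cases hPg : P.submodule ≤ ker g
    · exact Or.inl ⟨hP, hPg⟩
    · obtain ⟨c, hc⟩ := exists_submodule_le_ker_add_smul (f := f) hPg
      exact Or.inr (Set.mem_iUnion.2 ⟨c, hP, hc⟩)
  have hcount : n ≤ BH.ncard + Fintype.card F * (M - BH.ncard) :=
    hn ▸ Set.ncard_le_add_card_mul_of_subset_union_iUnion hcover
      (fun c P hP => ⟨hP.1, (hBH_le P hP).trans (ker_inf_le_ker_add_smul c)⟩)
      fun c => hM _ (isCoatom_ker_add_smul hfg c)
  have hsM : BH.ncard ≤ M := hM _ hH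
  have hsn : BH.ncard ≤ n := hn ▸ Set.ncard_le_ncard (Set.sep_subset _ _)
  refine h.not_ge (div_sub_le_of_le_add_mul (s := (BH.ncard : ℚ)) ?_ (by exact_mod_cast hm _ hH)
    (by exact_mod_cast hsn) (by rw [← Nat.cast_sub hsM]; exact_mod_cast hcount))
  exact_mod_cast Fintype.card_pos
end

section
/- If B ⊆ PG(k−1,q) is not a strong blocking set, then |B| ≤ qM − (q−1)m, where m and M are the minimum and maximum number of points of B on a hyperplane. -/
/-!
Let `H` be a hyperplane on which `B` fails to span, and pick a codimension-2 subspace `S ⊆ H`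
containing `B ∩ H`. The `q + 1` hyperplanes through `S` cover the whole space; besides `H` they
are the `q` hyperplanes `S + ⟨w + c u⟩` (`c ∈ 𝔽_q`, `u ∈ H \ S`, `w ∉ H`), and each of them
contains `B ∩ H ⊆ S` and at most `M - |B ∩ H|` further points of `B`. Hence
`|B| ≤ |B ∩ H| + q (M - |B ∩ H|) = qM - (q - 1)|B ∩ H| ≤ qM - (q - 1)m`.
-/

open Projectivization
open scoped LinearAlgebra.Projectivization

theorem Set.ncard_le_add_card_mul_sub {α ι : Type*} [Finite α] [Fintype ι]
    {B D : Set α} {A : ι → Set α} {M : ℕ} (hDA : ∀ i, D ⊆ A i) (hAM : ∀ i, (A i).ncard ≤ M)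
    (hB : B ⊆ D ∪ ⋃ i, A i) :
    (B.ncard : ℤ) ≤ D.ncard + Fintype.card ι * ((M : ℤ) - D.ncard) := by
  have hB' : B ⊆ D ∪ ⋃ i, A i \ D := by
    rwa [← Set.iUnion_sdiff, Set.union_sdiff_self]
  have hcard : B.ncard ≤ D.ncard + ∑ i, (A i \ D).ncard :=
    calc B.ncard ≤ (D ∪ ⋃ i, A i \ D).ncard := Set.ncard_le_ncard hB'
      _ ≤ D.ncard + (⋃ i, A i \ D).ncard := Set.ncard_union_le _ _
      _ ≤ D.ncard + ∑ i, (A i \ D).ncard := by gcongr; exact Set.ncard_iUnion_le_of_fintype _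
  have hdiff (i : ι) : ((A i \ D).ncard : ℤ) ≤ M - D.ncard := by
    rw [Set.ncard_sdiff (hDA i), Nat.cast_sub (Set.ncard_le_ncard (hDA i))]
    exact sub_le_sub_right (Int.ofNat_le.mpr (hAM i)) _
  calc (B.ncard : ℤ) ≤ D.ncard + ∑ i, ((A i \ D).ncard : ℤ) := by exact_mod_cast hcard
    _ ≤ D.ncard + ∑ _i : ι, ((M : ℤ) - D.ncard) := by gcongr with i; exact hdiff i
    _ = D.ncard + Fintype.card ι * ((M : ℤ) - D.ncard) := by
      rw [Finset.sum_const, Finset.card_univ, nsmul_eq_mul]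

theorem Projectivization.submodule_le_iff_rep_mem {K V : Type*} [DivisionRing K]
    [AddCommGroup V] [Module K V] (P : ℙ K V) (W : Submodule K V) :
    P.submodule ≤ W ↔ P.rep ∈ W := by
  rw [submodule_eq, Submodule.span_singleton_le_iff_mem]

namespace Submodule

variable {K V : Type*} [DivisionRing K] [AddCommGroup V] [Module K V]

theorem isCoatom_sup_span_singleton {S H : Submodule K V} (hH : IsCoatom H) (hSH : S ⋖ H)
    {x : V} (hx : x ∉ H) : IsCoatom (S ⊔ K ∙ x) := by
  have hinf : H ⊓ (S ⊔ K ∙ x) = S := by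
    rw [inf_comm, sup_inf_assoc_of_le _ hSH.le,
      (disjoint_span_singleton_of_notMem hx).symm.eq_bot, sup_bot_eq]
  have hsup : H ⊔ (S ⊔ K ∙ x) = ⊤ :=
    top_le_iff.mp <| (isCompl_span_singleton_of_isCoatom_of_notMem hH hx).sup_eq_top ▸
      sup_le_sup_left le_sup_right H
  rw [← covBy_top_iff, ← hsup]
  exact covBy_sup_of_inf_covBy_left (by rwa [hinf])

theorem exists_mem_sup_span_singleton_add_smul {S : Submodule K V} {u w x : V}
    (hx : x ∈ S ⊔ K ∙ u ⊔ K ∙ w) (hxS : x ∉ S ⊔ K ∙ u) :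
    ∃ c : K, x ∈ S ⊔ K ∙ (w + c • u) := by
  obtain ⟨y, hy, _, hz, rfl⟩ := mem_sup.mp hx
  obtain ⟨b, rfl⟩ := mem_span_singleton.mp hz
  obtain ⟨s, hs, _, ha, rfl⟩ := mem_sup.mp hy
  obtain ⟨a, rfl⟩ := mem_span_singleton.mp ha
  have hb : b ≠ 0 := by
    rintro rfl
    exact hxS (by simpa using add_mem (mem_sup_left hs) (mem_sup_right ha))
  refine ⟨b⁻¹ * a, ?_⟩
  have hsplit : s + a • u + b • w = s + b • (w + (b⁻¹ * a) • u) := by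
    rw [smul_add, smul_smul, mul_inv_cancel_left₀ hb]
    abel
  rw [hsplit]
  exact add_mem (mem_sup_left hs) (mem_sup_right (smul_mem _ b (mem_span_singleton_self _)))

theorem exists_coatoms_ge_covering_compl {S H : Submodule K V} (hH : IsCoatom H) (hSH : S ⋖ H) :
    ∃ f : K → Submodule K V, (∀ c, IsCoatom (f c)) ∧ (∀ c, S ≤ f c) ∧
      ∀ x ∉ H, ∃ c, x ∈ f c := by
  obtain ⟨u, huH, huS⟩ := SetLike.exists_of_lt hSH.lt
  obtain ⟨w, -, hwH⟩ := SetLike.exists_of_lt hH.lt_top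
  have hSu : S ⊔ K ∙ u = H := by
    refine (hSH.eq_or_eq le_sup_left (sup_le hSH.le ?_)).resolve_left fun h => huS ?_
    · exact (span_singleton_le_iff_mem u H).mpr huH
    · exact h ▸ mem_sup_right (mem_span_singleton_self u)
  have hHw : H ⊔ K ∙ w = ⊤ := (isCompl_span_singleton_of_isCoatom_of_notMem hH hwH).sup_eq_top
  refine ⟨fun c => S ⊔ K ∙ (w + c • u), fun c => ?_, fun c => le_sup_left, fun x hx => ?_⟩
  · refine isCoatom_sup_span_singleton hH hSH fun hmem => hwH ?_
    simpa using sub_mem hmem (smul_mem H c huH)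
  · refine exists_mem_sup_span_singleton_add_smul ?_ (hSu ▸ hx)
    rw [hSu, hHw]
    exact mem_top

end Submodule

/-- If `B ⊆ PG(k-1,q)` is not a strong blocking set then `|B| ≤ qM - (q-1)m`, where
`m` and `M` bound from below and above the number of points of `B` on any hyperplane. -/
theorem not_strong_blocking_card_le {F : Type*} [Field F] [Fintype F] {k : ℕ}
    (B : Set (ℙ F (Fin k → F))) (m M : ℕ)
    (hm : ∀ H : Submodule F (Fin k → F), IsCoatom H →
      m ≤ {P ∈ B | Projectivization.submodule P ≤ H}.ncard)
    (hM : ∀ H : Submodule F (Fin k → F), IsCoatom H →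
      {P ∈ B | Projectivization.submodule P ≤ H}.ncard ≤ M)
    (hnot : ¬ IsStrongBlocking B) :
    (B.ncard : ℤ) ≤ (Fintype.card F) * M - ((Fintype.card F : ℤ) - 1) * m := by
  obtain ⟨H, hH, hspan⟩ := not_forall₂.mp hnot
  set D := {P ∈ B | P.submodule ≤ H}
  have hDH : (⨆ P ∈ D, P.submodule) < H := lt_of_le_of_ne (iSup₂_le fun _ hP => hP.2) hspan
  obtain ⟨S, hDS, hSH⟩ := exists_le_covBy_of_lt hDH
  obtain ⟨f, hf, hSf, hf_cover⟩ := Submodule.exists_coatoms_ge_covering_compl hH hSH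
  have hcover : B ⊆ D ∪ ⋃ c, {P ∈ B | P.submodule ≤ f c} := by
    intro P hP
    by_cases hPH : P.submodule ≤ H
    · exact Or.inl ⟨hP, hPH⟩
    · rw [submodule_le_iff_rep_mem] at hPH
      obtain ⟨c, hc⟩ := hf_cover _ hPH
      exact Or.inr (Set.mem_iUnion.mpr ⟨c, hP, (submodule_le_iff_rep_mem _ _).mpr hc⟩)
  have hcount := Set.ncard_le_add_card_mul_sub (A := fun c => {P ∈ B | P.submodule ≤ f c})
    (fun c P hP => ⟨hP.1, ((le_biSup _ hP).trans hDS).trans (hSf c)⟩)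
    (fun c => hM _ (hf c)) hcover
  have hq : (1 : ℤ) ≤ Fintype.card F := by exact_mod_cast Fintype.card_pos
  have hmD : (m : ℤ) ≤ D.ncard := by exact_mod_cast hm H hH
  linarith [mul_le_mul_of_nonneg_left hmD (sub_nonneg.mpr hq)]
end

section
/- (Ashikhmin–Barg condition) Let C be a linear code over F_q with minimum nonzero weight d and maximum weight w. If d/w > (q−1)/q, then C is a minimal code. -/
/-!
Suppose `supp c' ⊆ supp c` but `c'` is not a multiple of `c`. Then the `q` codewords `c' - l • c`
are all nonzero, so their weights add up to at least `q d`. On the other hand, each coordinate in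
the support of `c` vanishes for exactly one `l`, and the other coordinates vanish for every `l`,
so the total weight is exactly `(q - 1) wt(c) ≤ (q - 1) w`. Hence `q d ≤ (q - 1) w`, contradicting
`d / w > (q - 1) / q`.
-/

open Finset

lemma hwt_eq_card_filter {ι F : Type*} [Zero F] [Fintype ι] [DecidableEq F] (v : ι → F) :
    hwt v = #{i | v i ≠ 0} := by
  simp [hwt, Set.ncard_eq_toFinset_card']

lemma card_filter_sub_mul_ne_zero {F : Type*} [Field F] [Fintype F] [DecidableEq F]
    {x : F} (hx : x ≠ 0) (y : F) : #{l | y - l * x ≠ 0} = Fintype.card F - 1 := by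
  have hfilter : ({l | y - l * x ≠ 0} : Finset F) = univ.erase (y / x) := by
    ext l
    simp [sub_eq_zero, eq_div_iff hx, eq_comm]
  rw [hfilter, card_erase_of_mem (mem_univ _), card_univ]

lemma sum_hwt_sub_smul_of_support_subset {F ι : Type*} [Field F] [Fintype F] [Fintype ι]
    {c c' : ι → F} (hsub : {i | c' i ≠ 0} ⊆ {i | c i ≠ 0}) :
    ∑ l : F, hwt (c' - l • c) = (Fintype.card F - 1) * hwt c := by
  classical
  have hcoord (i : ι) :
      #{l | c' i - l * c i ≠ 0} = if c i ≠ 0 then Fintype.card F - 1 else 0 := by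
    split_ifs with hci
    · exact card_filter_sub_mul_ne_zero hci _
    · have hc'i : c' i = 0 := not_not.mp fun h => hci (hsub h)
      simp_all
  simp only [hwt_eq_card_filter, card_filter, Pi.sub_apply, Pi.smul_apply, smul_eq_mul]
  rw [sum_comm]
  simp only [← card_filter, hcoord]
  rw [← sum_filter, sum_const, smul_eq_mul, mul_comm]

lemma sub_one_mul_lt_mul_of_div_lt_div {q d w : ℕ} (hq : 1 ≤ q)
    (h : ((q : ℚ) - 1) / q < d / w) : (q - 1) * w < q * d := by
  have hqQ : (1 : ℚ) ≤ q := by exact_mod_cast hq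
  rcases Nat.eq_zero_or_pos w with rfl | hw
  · have : (0 : ℚ) ≤ ((q : ℚ) - 1) / q := div_nonneg (by linarith) (by linarith)
    simp only [CharP.cast_eq_zero, div_zero] at h
    linarith
  · rw [div_lt_div_iff₀ (by linarith) (by exact_mod_cast hw)] at h
    have : (((q - 1) * w : ℕ) : ℚ) < ((q * d : ℕ) : ℚ) := by
      push_cast [Nat.cast_sub hq]
      linarith
    exact_mod_cast this

/-- Ashikhmin–Barg condition: a linear code over `F_q` with minimum nonzero weight `d`
and maximum weight `w` satisfying `d/w > (q-1)/q` is minimal. -/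
theorem AB_condition {F ι : Type*} [Field F] [Fintype F] [Fintype ι]
    (C : Submodule F (ι → F)) (d w : ℕ)
    (hd : ∀ c ∈ C, c ≠ 0 → d ≤ hwt c) (hw : ∀ c ∈ C, hwt c ≤ w)
    (h : (d : ℚ) / w > ((Fintype.card F : ℚ) - 1) / (Fintype.card F)) :
    IsMinimalCode (C : Set (ι → F)) := by
  intro c hc _ c' hc' hc'0 hsub
  by_contra! hnot_multiple
  have hne (l : F) : c' - l • c ≠ 0 := by
    rw [sub_ne_zero]
    rcases eq_or_ne l 0 with rfl | hl
    · simpa using hc'0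
    · exact hnot_multiple l hl
  have hlower : Fintype.card F * d ≤ (Fintype.card F - 1) * hwt c := by
    rw [← sum_hwt_sub_smul_of_support_subset hsub, ← smul_eq_mul, ← card_univ, ← sum_const]
    exact sum_le_sum fun l _ => hd _ (C.sub_mem hc' (C.smul_mem l hc)) (hne l)
  have hstrict := sub_one_mul_lt_mul_of_div_lt_div Fintype.card_pos h
  have hupper := Nat.mul_le_mul_left (Fintype.card F - 1) (hw c hc)
  omega
end

section
/- (Outer AB condition) Let C be an [N,K,D]_{q^k} linear code with maximum weight W satisfying D/W > (q−1)/q, and let I be an [n,k,d]_q minimal code with F_q-linear injection π: F_{q^k} → F_q^n whose image is I. Then the concatenated code I □_π C = {(π(c_1),…,π(c_N)) : c ∈ C} is a minimal linear code over F_q of length Nn, dimension Kk, and minimum distance at least Dd. -/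
/-- The concatenation `I □_π C` of an outer code `C ⊆ E^N` over the extension field `E` with
the inner code `I = π(E) ⊆ F^n`, applying `π` coordinatewise. -/
def concatCode {F E : Type*} [Field F] [Field E] [Algebra F E] {N n : ℕ}
    (C : Submodule E (Fin N → E)) (π : E →ₗ[F] (Fin n → F)) : Set (Fin N × Fin n → F) :=
  {x | ∃ c ∈ C, x = fun p => π (c p.1) p.2}

/-!
The inner code's minimality, applied coordinatewise, turns a support inclusion
`supp (π ∘ c') ⊆ supp (π ∘ c)` between concatenated codewords into `c' i = λ i • c i` with
`λ i ∈ F_q^*`. If `c'` were not a global `F_q`-multiple of `c`, then for each `l ∈ F_q^*` the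
codeword `c' - l • c` would be nonzero with support inside `supp c` minus the fibre `λ⁻¹ {l}`,
so `D + #λ⁻¹{l} ≤ W`. Summing over the `q - 1` values of `l` gives `(q - 1) D + wt c' ≤ (q - 1) W`,
hence `q D ≤ (q - 1) W`, contradicting `D / W > (q - 1) / q`. Dimension and distance follow
because concatenation is an injective `F_q`-linear map and weights add over outer coordinates.
-/

open Finset

lemma hwt_eq_card {ι M : Type*} [Fintype ι] [Zero M] (v : ι → M)
    [DecidablePred fun i => v i ≠ 0] :
    hwt v = #{i | v i ≠ 0} := by
  rw [hwt, Set.ncard_eq_toFinset_card']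
  congr 1
  ext i
  simp

section Concatenation

variable {F E : Type*} [Field F] [Field E] [Algebra F E] {ι κ : Type*}

def concatMap (π : E →ₗ[F] (κ → F)) : (ι → E) →ₗ[F] (ι × κ → F) where
  toFun c p := π (c p.1) p.2
  map_add' _ _ := by ext; simp
  map_smul' _ _ := by ext; simp

theorem concatMap_injective {π : E →ₗ[F] (κ → F)} (hπ : Function.Injective π) :
    Function.Injective (concatMap (ι := ι) π) :=
  fun _ _ h => funext fun i => hπ <| funext fun j => congrFun h (i, j)

theorem hwt_concatMap [Fintype ι] [Fintype κ] (π : E →ₗ[F] (κ → F)) (c : ι → E) :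
    hwt (concatMap π c) = ∑ i, hwt (π (c i)) := by
  classical
  simp only [hwt_eq_card, card_filter, Fintype.sum_prod_type]
  rfl

theorem concatCode_eq_map {N n : ℕ} (C : Submodule E (Fin N → E)) (π : E →ₗ[F] (Fin n → F)) :
    concatCode C π = ((C.restrictScalars F).map (concatMap π) : Set (Fin N × Fin n → F)) := by
  ext x
  exact ⟨fun ⟨c, hc, hx⟩ => ⟨c, hc, hx.symm⟩, fun ⟨c, hc, hx⟩ => ⟨c, hc, hx.symm⟩⟩

end Concatenation

theorem finrank_span_concatCode {F E : Type*} [Field F] [Field E] [Algebra F E] {N n : ℕ}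
    (C : Submodule E (Fin N → E)) {π : E →ₗ[F] (Fin n → F)} (hπ : Function.Injective π) :
    Module.finrank F (Submodule.span F (concatCode C π)) =
      Module.finrank E C * Module.finrank F E := by
  rw [concatCode_eq_map, Submodule.span_eq,
    ← (Submodule.equivMapOfInjective _ (concatMap_injective hπ) _).finrank_eq,
    ((Submodule.restrictScalarsEquiv F E _ C).restrictScalars F).finrank_eq,
    ← Module.finrank_mul_finrank F E C, mul_comm]

theorem mul_le_hwt_of_mem_concatCode {F E : Type*} [Field F] [Field E] [Algebra F E]
    {N n D d : ℕ} {C : Submodule E (Fin N → E)} {π : E →ₗ[F] (Fin n → F)}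
    (hD : ∀ c ∈ C, c ≠ 0 → D ≤ hwt c) (hd : ∀ y : E, y ≠ 0 → d ≤ hwt (π y))
    {x : Fin N × Fin n → F} (hx : x ∈ concatCode C π) (hx0 : x ≠ 0) :
    D * d ≤ hwt x := by
  classical
  obtain ⟨c, hc, rfl⟩ := hx
  have hc0 : c ≠ 0 := by rintro rfl; exact hx0 (by ext; simp)
  calc D * d ≤ #{i | c i ≠ 0} * d := Nat.mul_le_mul_right _ (hwt_eq_card c ▸ hD c hc hc0)
    _ = ∑ i with c i ≠ 0, d := by rw [sum_const, smul_eq_mul]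
    _ ≤ ∑ i with c i ≠ 0, hwt (π (c i)) := sum_le_sum fun i hi => hd (c i) (mem_filter.mp hi).2
    _ ≤ ∑ i, hwt (π (c i)) := sum_le_sum_of_subset (filter_subset _ _)
    _ = hwt (concatMap π c) := (hwt_concatMap π c).symm

theorem div_le_sub_one_div_of_mul_le {q D W : ℕ} (hq : 0 < q) (h : q * D ≤ (q - 1) * W) :
    (D : ℚ) / W ≤ ((q : ℚ) - 1) / q := by
  have hq1 : (1 : ℚ) ≤ q := by exact_mod_cast hq
  rcases W.eq_zero_or_pos with rfl | hW
  · simpa using div_nonneg (sub_nonneg.mpr hq1) (Nat.cast_nonneg q)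
  rw [div_le_div_iff₀ (by exact_mod_cast hW) (by positivity)]
  have hcast : ((q * D : ℕ) : ℚ) ≤ ((q - 1) * W : ℕ) := by exact_mod_cast h
  push_cast [Nat.cast_sub (R := ℚ) hq] at hcast
  linarith

theorem sum_card_fiber_eq_hwt {ι M R : Type*} [Fintype ι] [Zero M] [DecidableEq M] [Zero R]
    [Fintype R] [DecidableEq R] {c' : ι → M} {L : ι → R}
    (hL : ∀ i, c' i ≠ 0 → L i ≠ 0) :
    ∑ l ∈ univ.erase 0, #{i | c' i ≠ 0 ∧ L i = l} = hwt c' := by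
  rw [hwt_eq_card, card_eq_sum_card_fiberwise fun i hi =>
    mem_erase.mpr ⟨hL i (mem_filter.mp hi).2, mem_univ _⟩]
  simp only [filter_filter]

section OuterCode

variable {F M ι : Type*} [Field F] [AddCommGroup M] [Module F M] [Fintype ι]

theorem hwt_sub_smul_add_card_le [DecidableEq F] [DecidableEq M] {c c' : ι → M} {L : ι → F}
    (hL : ∀ i, c' i ≠ 0 → c' i = L i • c i) (l : F) :
    hwt (c' - l • c) + #{i | c' i ≠ 0 ∧ L i = l} ≤ hwt c := by
  classical
  rw [hwt_eq_card, hwt_eq_card, ← card_union_of_disjoint]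
  · refine card_le_card fun i => ?_
    simp only [mem_union, mem_filter, mem_univ, true_and, Pi.sub_apply, Pi.smul_apply]
    rintro (h | ⟨h, rfl⟩) hc
    · have hc' : c' i = 0 := by
        by_contra h'
        exact h' (by rw [hL i h', hc, smul_zero])
      exact h (by rw [hc', hc, smul_zero, sub_zero])
    · exact h (by rw [hL i h, hc, smul_zero])
  · exact disjoint_filter.mpr fun i _ h ⟨h', hl⟩ => h (by simp [hL i h', hl])

variable [Fintype F]

theorem card_mul_le_of_forall_sub_smul_ne_zero (C : Submodule F (ι → M)) {D W : ℕ}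
    (hD : ∀ c ∈ C, c ≠ 0 → D ≤ hwt c) (hW : ∀ c ∈ C, hwt c ≤ W)
    {c c' : ι → M} (hc : c ∈ C) (hc' : c' ∈ C) (hc'0 : c' ≠ 0) {L : ι → F}
    (hL : ∀ i, c' i ≠ 0 → L i ≠ 0 ∧ c' i = L i • c i) (hne : ∀ l : F, l ≠ 0 → c' - l • c ≠ 0) :
    Fintype.card F * D ≤ (Fintype.card F - 1) * W := by
  classical
  have hfiber : ∀ l ∈ univ.erase (0 : F), D + #{i | c' i ≠ 0 ∧ L i = l} ≤ W := fun l hl =>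
    (Nat.add_le_add_right (hD _ (C.sub_mem hc' (C.smul_mem l hc)) (hne l (ne_of_mem_erase hl))) _
      ).trans ((hwt_sub_smul_add_card_le (fun i hi => (hL i hi).2) l).trans (hW c hc))
  have hsum := sum_le_sum hfiber
  rw [sum_add_distrib, sum_const, sum_const, sum_card_fiber_eq_hwt fun i hi => (hL i hi).1,
    card_erase_of_mem (mem_univ _), card_univ, smul_eq_mul, smul_eq_mul] at hsum
  have hc'D := hD c' hc' hc'0
  obtain ⟨p, hp⟩ : ∃ p, Fintype.card F = p + 1 := Nat.exists_eq_add_one.mpr Fintype.card_pos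
  rw [hp, Nat.add_sub_cancel] at hsum ⊢
  rw [add_mul, one_mul]
  omega

theorem exists_eq_smul_of_forall_apply_eq_smul (C : Submodule F (ι → M)) {D W : ℕ}
    (hD : ∀ c ∈ C, c ≠ 0 → D ≤ hwt c) (hW : ∀ c ∈ C, hwt c ≤ W)
    (hDW : (D : ℚ) / W > ((Fintype.card F : ℚ) - 1) / (Fintype.card F))
    {c c' : ι → M} (hc : c ∈ C) (hc' : c' ∈ C) (hc'0 : c' ≠ 0)
    (hprop : ∀ i, c' i ≠ 0 → ∃ l : F, l ≠ 0 ∧ c' i = l • c i) :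
    ∃ l : F, l ≠ 0 ∧ c' = l • c := by
  choose! L hL using hprop
  by_contra! hne
  exact (not_le.mpr hDW) <| div_le_sub_one_div_of_mul_le Fintype.card_pos <|
    card_mul_le_of_forall_sub_smul_ne_zero C hD hW hc hc' hc'0 hL fun l hl =>
      sub_ne_zero.mpr (hne l hl)

end OuterCode

theorem exists_eq_smul_of_support_subset {F E ι : Type*} [Field F] [AddCommGroup E] [Module F E]
    {π : E →ₗ[F] (ι → F)} (hπ : Function.Injective π) (hmin : IsMinimalCode (Set.range π))
    {y y' : E} (hy' : y' ≠ 0) (hsub : {j | π y' j ≠ 0} ⊆ {j | π y j ≠ 0}) :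
    ∃ l : F, l ≠ 0 ∧ y' = l • y := by
  have hπy' : π y' ≠ 0 := (map_ne_zero_iff π hπ).mpr hy'
  have hπy : π y ≠ 0 := by
    intro h
    refine hπy' (funext fun j => by_contra fun hj => hsub hj ?_)
    simp [h]
  obtain ⟨l, hl, he⟩ := hmin _ ⟨y, rfl⟩ hπy _ ⟨y', rfl⟩ hπy' hsub
  exact ⟨l, hl, hπ (by rw [he, map_smul])⟩

theorem isMinimalCode_concatCode {F E : Type*} [Field F] [Fintype F] [Field E] [Algebra F E]
    {N n D W : ℕ} {C : Submodule E (Fin N → E)}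
    (hD : ∀ c ∈ C, c ≠ 0 → D ≤ hwt c) (hW : ∀ c ∈ C, hwt c ≤ W)
    (hDW : (D : ℚ) / W > ((Fintype.card F : ℚ) - 1) / (Fintype.card F))
    {π : E →ₗ[F] (Fin n → F)} (hπ : Function.Injective π) (hmin : IsMinimalCode (Set.range π)) :
    IsMinimalCode (concatCode C π) := by
  rintro _ ⟨c, hc, rfl⟩ - _ ⟨c', hc', rfl⟩ hx'0 hsub
  have hc'0 : c' ≠ 0 := by rintro rfl; exact hx'0 (by ext; simp)
  have hprop (i : Fin N) (hi : c' i ≠ 0) : ∃ l : F, l ≠ 0 ∧ c' i = l • c i :=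
    exists_eq_smul_of_support_subset hπ hmin hi fun j hj => hsub (a := (i, j)) hj
  obtain ⟨l, hl, rfl⟩ :=
    exists_eq_smul_of_forall_apply_eq_smul (C.restrictScalars F) hD hW hDW hc hc' hc'0 hprop
  exact ⟨l, hl, by ext; simp⟩

/-- Outer AB condition: if the outer `[N,K,D]_{q^k}` code `C` has maximum weight `W` with
`D/W > (q-1)/q`, and the inner `[n,k,d]_q` code `π(E)` is minimal, then the concatenated code
is a minimal `F_q`-linear code of length `Nn`, dimension `Kk`, and minimum distance `≥ Dd`. -/
theorem outer_AB_condition {F E : Type*} [Field F] [Fintype F] [Field E] [Algebra F E]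
    {k N n : ℕ} (hk : Module.finrank F E = k)
    (C : Submodule E (Fin N → E)) (K D W d : ℕ)
    (hK : Module.finrank E C = K)
    (hD : ∀ c ∈ C, c ≠ 0 → D ≤ hwt c)
    (hW : ∀ c ∈ C, hwt c ≤ W)
    (hDW : (D : ℚ) / W > ((Fintype.card F : ℚ) - 1) / (Fintype.card F))
    (π : E →ₗ[F] (Fin n → F)) (hπ : Function.Injective π)
    (hd : ∀ x : E, x ≠ 0 → d ≤ hwt (π x))
    (hmin : IsMinimalCode (Set.range π)) :
    IsMinimalCode (concatCode C π) ∧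
    Module.finrank F (Submodule.span F (concatCode C π)) = K * k ∧
    (∀ x ∈ concatCode C π, x ≠ 0 → D * d ≤ hwt x) ∧
    Fintype.card (Fin N × Fin n) = N * n :=
  ⟨isMinimalCode_concatCode hD hW hDW hπ hmin, hK ▸ hk ▸ finrank_span_concatCode C hπ,
    fun _ hx hx0 => mul_le_hwt_of_mem_concatCode hD hd hx hx0, by simp⟩
end
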